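/- arXiv:1904.09716 — 2 statements merged into one kernel-verified Lean document; each statement's English description precedes it below -/
import Mathlib

section
/- For all n ≥ 1, β₁, …, βₙ > 0 and x₀, xₙ ∈ ℝ^d, the (n-1)-fold chain integral ∫_{ℝ^d}⋯∫_{ℝ^d} ∏_{i=1}^n exp(-β_i‖x_{i-1}-x_i‖²) dx₁⋯dx_{n-1} equals (π^{n-1}/Σ_{i=1}^n β₁⋯β_{i-1}β_{i+1}⋯βₙ)^{d/2} · exp(-(β₁⋯βₙ/Σ_{i=1}^n β₁⋯β_{i-1}β_{i+1}⋯βₙ)‖x₀-xₙ‖²). -/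
/-!
Integrating out the last intermediate point is a Gaussian convolution: completing the square,
`exp (-a‖x - y‖²) exp (-b‖y - z‖²) = exp (-(a + b)‖y - c‖²) exp (-(ab / (a + b))‖x - z‖²)`,
so the integral over `y` contributes `(π / (a + b)) ^ (d / 2)` and leaves a chain one point shorter
in which the last two weights are replaced by their harmonic combination `ab / (a + b)`.
This replacement keeps `∑ 1 / βᵢ` and divides `∏ βᵢ` by `a + b`, so by induction the chain integral
is `(π ^ (n - 1) / (∏ βᵢ * ∑ 1 / βᵢ)) ^ (d / 2) * exp (-‖x₀ - xₙ‖² / ∑ 1 / βᵢ)`,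
and `∏ βᵢ * ∑ 1 / βᵢ` is the sum of the products of all but one of the weights.
-/

open Finset MeasureTheory Real

theorem sum_prod_erase_eq_prod_mul_sum_inv {ι K : Type*} [DecidableEq ι] [Field K] (s : Finset ι)
    (f : ι → K) (hf : ∀ i ∈ s, f i ≠ 0) :
    ∑ i ∈ s, ∏ j ∈ s.erase i, f j = (∏ j ∈ s, f j) * ∑ i ∈ s, (f i)⁻¹ := by
  rw [mul_sum]
  refine sum_congr rfl fun i hi => ?_
  rw [← prod_erase_mul s f hi, mul_inv_cancel_right₀ (hf i hi)]

@[to_additive]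
theorem prod_range_succ_comp_update {α M : Type*} [CommMonoid M] (g : α → M) (β : ℕ → α) (m : ℕ)
    (c : α) :
    ∏ i ∈ range (m + 1), g (Function.update β m c i) = (∏ i ∈ range m, g (β i)) * g c := by
  rw [prod_range_succ, Function.update_self]
  congr 1
  exact prod_congr rfl fun i hi => by rw [Function.update_of_ne (mem_range.1 hi).ne]

theorem lintegral_fin_snoc {α : Type*} [MeasureSpace α] [SigmaFinite (volume : Measure α)] {m : ℕ}
    {f : (Fin (m + 1) → α) → ENNReal} (hf : Measurable f) :
    ∫⁻ z, f z = ∫⁻ w : Fin m → α, ∫⁻ y, f (Fin.snoc w y) := by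
  have e := (volume_preserving_piFinSuccAbove (fun _ : Fin (m + 1) => α) (Fin.last m)).symm
  rw [← e.lintegral_comp hf, Measure.volume_eq_prod]
  refine (lintegral_prod_symm' _ (hf.comp (MeasurableEquiv.measurable _))).trans ?_
  simp [MeasurableEquiv.piFinSuccAbove_symm_apply, Fin.insertNthEquiv, Fin.insertNth_last']

section Gaussian

variable {V : Type*} [NormedAddCommGroup V] [InnerProductSpace ℝ V]

theorem mul_norm_sub_sq_add_mul_norm_sub_sq {a b : ℝ} (hab : a + b ≠ 0) (x y z : V) :
    a * ‖x - y‖ ^ 2 + b * ‖y - z‖ ^ 2 =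
      (a + b) * ‖y - (a + b)⁻¹ • (a • x + b • z)‖ ^ 2 + a * b / (a + b) * ‖x - z‖ ^ 2 := by
  simp only [← real_inner_self_eq_norm_sq, inner_sub_left, inner_sub_right, inner_add_left,
    inner_add_right, real_inner_smul_left, real_inner_smul_right, real_inner_comm x y,
    real_inner_comm x z, real_inner_comm y z]
  field_simp
  ring

variable [FiniteDimensional ℝ V] [MeasurableSpace V] [BorelSpace V]

theorem lintegral_exp_neg_mul_sq_norm {c : ℝ} (hc : 0 < c) :
    ∫⁻ y : V, ENNReal.ofReal (exp (-c * ‖y‖ ^ 2)) =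
      ENNReal.ofReal ((π / c) ^ (Module.finrank ℝ V / 2 : ℝ)) := by
  have h := GaussianFourier.integral_rexp_neg_mul_sq_norm (V := V) hc
  have hint : Integrable fun y : V => exp (-c * ‖y‖ ^ 2) :=
    Integrable.of_integral_ne_zero (by rw [h]; positivity)
  rw [← h, ofReal_integral_eq_lintegral_ofReal hint (ae_of_all _ fun _ => (exp_pos _).le)]

theorem lintegral_exp_neg_mul_norm_sub_sq_mul {a b : ℝ} (ha : 0 < a) (hb : 0 < b) (x z : V) :
    ∫⁻ y : V, ENNReal.ofReal (exp (-a * ‖x - y‖ ^ 2) * exp (-b * ‖y - z‖ ^ 2)) =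
      ENNReal.ofReal ((π / (a + b)) ^ (Module.finrank ℝ V / 2 : ℝ) *
        exp (-(a * b / (a + b)) * ‖x - z‖ ^ 2)) := by
  have hab : 0 < a + b := add_pos ha hb
  have hsplit : ∀ y : V, exp (-a * ‖x - y‖ ^ 2) * exp (-b * ‖y - z‖ ^ 2) =
      exp (-(a * b / (a + b)) * ‖x - z‖ ^ 2) *
        exp (-(a + b) * ‖y - (a + b)⁻¹ • (a • x + b • z)‖ ^ 2) := fun y => by
    have := mul_norm_sub_sq_add_mul_norm_sub_sq hab.ne' x y z
    rw [← exp_add, ← exp_add]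
    congr 1
    linarith
  simp_rw [hsplit, ENNReal.ofReal_mul (exp_pos _).le]
  rw [lintegral_const_mul' _ _ ENNReal.ofReal_ne_top,
    lintegral_sub_right_eq_self (fun y => ENNReal.ofReal (exp (-(a + b) * ‖y‖ ^ 2))),
    lintegral_exp_neg_mul_sq_norm hab, ← ENNReal.ofReal_mul (exp_pos _).le, mul_comm]

end Gaussian

section ChainPoint

variable {V : Type*}

/-- The chain `x₀, z 0, …, z (m - 1), xₙ` indexed from `0`, continued by `xₙ` beyond `m + 1`. -/
def chainPoint (x₀ xₙ : V) {m : ℕ} (z : Fin m → V) (j : ℕ) : V :=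
  if hj : 1 ≤ j ∧ j < m + 1 then z ⟨j - 1, by omega⟩ else if j = 0 then x₀ else xₙ

variable (x₀ xₙ : V) {m : ℕ}

@[simp]
theorem chainPoint_last (z : Fin m → V) : chainPoint x₀ xₙ z (m + 1) = xₙ := by
  simp [chainPoint]

theorem chainPoint_snoc_of_le (w : Fin m → V) (y : V) {j : ℕ} (hj : j ≤ m) :
    chainPoint x₀ xₙ (Fin.snoc w y : Fin (m + 1) → V) j = chainPoint x₀ xₙ w j := by
  unfold chainPoint
  by_cases h : 1 ≤ j
  · rw [dif_pos ⟨h, by omega⟩, dif_pos ⟨h, by omega⟩]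
    exact Fin.snoc_castSucc (α := fun _ => V) y w ⟨j - 1, by omega⟩
  · rw [dif_neg (by omega), dif_neg (by omega)]

@[simp]
theorem chainPoint_snoc_self (w : Fin m → V) (y : V) :
    chainPoint x₀ xₙ (Fin.snoc w y : Fin (m + 1) → V) (m + 1) = y := by
  rw [chainPoint, dif_pos ⟨by omega, by omega⟩]
  exact Fin.snoc_last (α := fun _ => V) y w

theorem measurable_chainPoint [MeasurableSpace V] (j : ℕ) :
    Measurable fun z : Fin m → V => chainPoint x₀ xₙ z j := by
  unfold chainPoint
  split_ifs
  exacts [measurable_pi_apply _, measurable_const, measurable_const]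

end ChainPoint

section ChainWeight

variable {V : Type*} [NormedAddCommGroup V] (β : ℕ → ℝ) (x₀ xₙ : V) {m : ℕ}

noncomputable def chainWeight (z : Fin m → V) : ℝ :=
  ∏ i ∈ range (m + 1), exp (-β i * ‖chainPoint x₀ xₙ z i - chainPoint x₀ xₙ z (i + 1)‖ ^ 2)

theorem chainWeight_nonneg (z : Fin m → V) : 0 ≤ chainWeight β x₀ xₙ z :=
  prod_nonneg fun _ _ => (exp_pos _).le

theorem chainWeight_snoc (w : Fin m → V) (y : V) :
    chainWeight β x₀ xₙ (Fin.snoc w y : Fin (m + 1) → V) =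
      (∏ i ∈ range m, exp (-β i * ‖chainPoint x₀ xₙ w i - chainPoint x₀ xₙ w (i + 1)‖ ^ 2)) *
        (exp (-β m * ‖chainPoint x₀ xₙ w m - y‖ ^ 2) * exp (-β (m + 1) * ‖y - xₙ‖ ^ 2)) := by
  rw [chainWeight, prod_range_succ, prod_range_succ, mul_assoc]
  congr 1
  · refine prod_congr rfl fun i hi => ?_
    have hi : i < m := mem_range.1 hi
    rw [chainPoint_snoc_of_le _ _ _ _ hi.le, chainPoint_snoc_of_le _ _ _ _ hi]
  · rw [chainPoint_snoc_of_le _ _ _ _ le_rfl, chainPoint_snoc_self, chainPoint_last]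

theorem chainWeight_update_self (c : ℝ) (w : Fin m → V) :
    chainWeight (Function.update β m c) x₀ xₙ w =
      (∏ i ∈ range m, exp (-β i * ‖chainPoint x₀ xₙ w i - chainPoint x₀ xₙ w (i + 1)‖ ^ 2)) *
        exp (-c * ‖chainPoint x₀ xₙ w m - xₙ‖ ^ 2) := by
  rw [chainWeight, prod_range_succ, chainPoint_last, Function.update_self]
  congr 1
  exact prod_congr rfl fun i hi => by rw [Function.update_of_ne (mem_range.1 hi).ne]

theorem measurable_chainWeight [MeasurableSpace V] [BorelSpace V] [SecondCountableTopology V] :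
    Measurable (chainWeight β x₀ xₙ : (Fin m → V) → ℝ) :=
  Finset.measurable_prod _ fun i _ => measurable_exp.comp <| measurable_const.mul <|
    ((measurable_chainPoint x₀ xₙ i).sub (measurable_chainPoint x₀ xₙ (i + 1))).norm.pow_const 2

end ChainWeight

section ChainIntegral

variable {V : Type*} [NormedAddCommGroup V] [InnerProductSpace ℝ V] [FiniteDimensional ℝ V]
  [MeasurableSpace V] [BorelSpace V]

theorem lintegral_chainWeight_snoc {m : ℕ} {β : ℕ → ℝ} (ha : 0 < β m) (hb : 0 < β (m + 1))
    (x₀ xₙ : V) (w : Fin m → V) :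
    ∫⁻ y, ENNReal.ofReal (chainWeight β x₀ xₙ (Fin.snoc w y : Fin (m + 1) → V)) =
      ENNReal.ofReal ((π / (β m + β (m + 1))) ^ (Module.finrank ℝ V / 2 : ℝ)) *
        ENNReal.ofReal (chainWeight (Function.update β m (β m * β (m + 1) / (β m + β (m + 1))))
          x₀ xₙ w) := by
  have hprod := prod_nonneg fun i (_ : i ∈ range m) =>
    (exp_pos (-β i * ‖chainPoint x₀ xₙ w i - chainPoint x₀ xₙ w (i + 1)‖ ^ 2)).le
  simp_rw [chainWeight_snoc, ENNReal.ofReal_mul hprod]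
  rw [lintegral_const_mul' _ _ ENNReal.ofReal_ne_top, lintegral_exp_neg_mul_norm_sub_sq_mul ha hb,
    chainWeight_update_self, ← ENNReal.ofReal_mul hprod, ← ENNReal.ofReal_mul (by positivity)]
  congr 1
  ring

theorem lintegral_chainWeight (m : ℕ) (β : ℕ → ℝ) (hβ : ∀ i ≤ m, 0 < β i) (x₀ xₙ : V) :
    ∫⁻ z : Fin m → V, ENNReal.ofReal (chainWeight β x₀ xₙ z) =
      ENNReal.ofReal ((π ^ m / ((∏ i ∈ range (m + 1), β i) * ∑ i ∈ range (m + 1), (β i)⁻¹)) ^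
          (Module.finrank ℝ V / 2 : ℝ) *
        exp (-(∑ i ∈ range (m + 1), (β i)⁻¹)⁻¹ * ‖x₀ - xₙ‖ ^ 2)) := by
  induction m generalizing β with
  | zero => simp [lintegral_unique, chainWeight, chainPoint, (hβ 0 le_rfl).ne', volume_pi]
  | succ m ih =>
    have ha : 0 < β m := hβ m (by omega)
    have hb : 0 < β (m + 1) := hβ (m + 1) le_rfl
    set c := β m * β (m + 1) / (β m + β (m + 1)) with hc
    have hγ : ∀ i ≤ m, 0 < Function.update β m c i := by
      intro i hi
      rcases hi.lt_or_eq with hi | rfl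
      · rw [Function.update_of_ne hi.ne]; exact hβ i (by omega)
      · rw [Function.update_self]; positivity
    have hP : 0 < ∏ i ∈ range m, β i := prod_pos fun i hi => hβ i (by simp at hi; omega)
    have hH : 0 ≤ ∑ i ∈ range m, (β i)⁻¹ := sum_nonneg fun i hi =>
      inv_nonneg.2 (hβ i (by simp at hi; omega)).le
    rw [lintegral_fin_snoc (measurable_chainWeight β x₀ xₙ).ennreal_ofReal]
    simp_rw [lintegral_chainWeight_snoc ha hb]
    rw [lintegral_const_mul' _ _ ENNReal.ofReal_ne_top, ih _ hγ,
      ← ENNReal.ofReal_mul (by positivity), prod_range_succ_comp_update (fun x => x), sum_range_succ_comp_update (·⁻¹),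
      prod_range_succ _ (m + 1), prod_range_succ, sum_range_succ _ (m + 1), sum_range_succ,
      ← mul_assoc, ← mul_rpow (by positivity) (by positivity)]
    have hc_inv : c⁻¹ = (β m)⁻¹ + (β (m + 1))⁻¹ := by rw [hc]; field_simp; ring
    rw [hc_inv, add_assoc]
    congr 3
    rw [hc]
    field_simp
    ring

theorem integral_chainWeight (m : ℕ) (β : ℕ → ℝ) (hβ : ∀ i ≤ m, 0 < β i) (x₀ xₙ : V) :
    ∫ z : Fin m → V, chainWeight β x₀ xₙ z =
      (π ^ m / ((∏ i ∈ range (m + 1), β i) * ∑ i ∈ range (m + 1), (β i)⁻¹)) ^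
          (Module.finrank ℝ V / 2 : ℝ) *
        exp (-(∑ i ∈ range (m + 1), (β i)⁻¹)⁻¹ * ‖x₀ - xₙ‖ ^ 2) := by
  have hP : 0 ≤ ∏ i ∈ range (m + 1), β i := prod_nonneg fun i hi => (hβ i (by simp at hi; omega)).le
  have hH : 0 ≤ ∑ i ∈ range (m + 1), (β i)⁻¹ :=
    sum_nonneg fun i hi => inv_nonneg.2 (hβ i (by simp at hi; omega)).le
  rw [integral_eq_lintegral_of_nonneg_ae (ae_of_all _ (chainWeight_nonneg β x₀ xₙ))
    (measurable_chainWeight β x₀ xₙ).aestronglyMeasurable, lintegral_chainWeight m β hβ,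
    ENNReal.toReal_ofReal (by positivity)]

end ChainIntegral

/-- Lemma 5.2 of the paper: the `(n-1)`-fold Gaussian chain integral. -/
theorem gaussian_chain_integral (d n : ℕ) (hn : 1 ≤ n) (β : ℕ → ℝ)
    (hβ : ∀ i < n, 0 < β i) (x₀ xₙ : EuclideanSpace ℝ (Fin d)) :
    (∫ z : Fin (n - 1) → EuclideanSpace ℝ (Fin d),
        ∏ i ∈ range n,
          Real.exp (-(β i) *
            ‖(fun j : ℕ => if hj : 1 ≤ j ∧ j < n then z ⟨j - 1, by omega⟩
                else if j = 0 then x₀ else xₙ) i -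
             (fun j : ℕ => if hj : 1 ≤ j ∧ j < n then z ⟨j - 1, by omega⟩
                else if j = 0 then x₀ else xₙ) (i + 1)‖ ^ 2)) =
      (Real.pi ^ (n - 1) / ∑ i ∈ range n, ∏ j ∈ (range n).erase i, β j) ^ ((d : ℝ) / 2) *
        Real.exp (-((∏ j ∈ range n, β j) /
            ∑ i ∈ range n, ∏ j ∈ (range n).erase i, β j) * ‖x₀ - xₙ‖ ^ 2) := by
  obtain ⟨m, rfl⟩ : ∃ m, n = m + 1 := ⟨n - 1, by omega⟩
  change ∫ z : Fin m → EuclideanSpace ℝ (Fin d), chainWeight β x₀ xₙ z = _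
  have hP : ∏ j ∈ range (m + 1), β j ≠ 0 := (prod_pos fun i hi => hβ i (mem_range.1 hi)).ne'
  rw [integral_chainWeight m β (fun i hi => hβ i (by omega)), finrank_euclideanSpace_fin,
    Nat.add_sub_cancel,
    sum_prod_erase_eq_prod_mul_sum_inv _ _ fun i hi => (hβ i (mem_range.1 hi)).ne',
    div_mul_cancel_left₀ hP]
end

section
/- For β > 0, λ > 0 and x, y ∈ ℝ^d, the variance of the 3-hop count N₃ between x and y in the Poisson random-connection model on ℝ^d with intensity λ·dx and connection function H_β(u,v) = exp(-β‖u-v‖²) equals 2λ³(π³/(8β³))^{d/2} e^{-β‖x-y‖²/2} + λ²(π²/(3β²))^{d/2} e^{-β‖x-y‖²/3} + 2λ³(π³/(12β³))^{d/2} e^{-3β‖x-y‖²/4} + λ²(π²/(8β²))^{d/2} e^{-β‖x-y‖²}, given the identity Var[N₃] = 2∫ H_β(x,z)H^{(2)}(z,y)² λdz + 2∫ H_β(x,z)H^{(2)}(x,z)H^{(2)}(z,y)H_β(z,y) λdz + ∫∫ H_β(x,z₁)H_β(z₁,z₂)H_β(z₂,y)H_β(x,z₂)H_β(z₁,y) λ²dz₁dz₂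 + H^{(3)}(x,y), where H^{(2)}(u,v) = λ∫H_β(u,w)H_β(w,v)dw and H^{(3)}(u,v) = λ²∫∫H_β(u,w₁)H_β(w₁,w₂)H_β(w₂,v)dw₁dw₂. -/
/-!
All four terms are Gaussian integrals. Completing the square,
`a ‖u - w‖² + b ‖w - v‖² = (a + b) ‖w - m‖² + (ab / (a + b)) ‖u - v‖²` with `m` the weighted mean
of `u` and `v`, so a product of two kernels `H_a(u, w) H_b(w, v)` integrates over `w` to
`(π / (a + b))^{d/2} H_{ab/(a+b)}(u, v)`. In particular `H⁽²⁾ = λ (π / 2β)^{d/2} H_{β/2}`, the first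
two terms become single convolutions of Gaussians and `H⁽³⁾` a double one. In the five-kernel
double integral, `H_β(x, z) H_β(z, y) = H_{β/2}(x, y) H_{2β}(z, (x + y) / 2)` for `z = z₁, z₂`,
after which the two integrations are again convolutions.
-/

open MeasureTheory Real Module
open scoped RealInnerProductSpace

section Kernel

variable {V : Type*} [NormedAddCommGroup V]

noncomputable def rayleighKernel (b : ℝ) (u v : V) : ℝ := rexp (-b * ‖u - v‖ ^ 2)

theorem rayleighKernel_pos (b : ℝ) (u v : V) : 0 < rayleighKernel b u v := exp_pos _

theorem rayleighKernel_le_one {b : ℝ} (hb : 0 ≤ b) (u v : V) : rayleighKernel b u v ≤ 1 :=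
  exp_le_one_iff.mpr (by nlinarith [sq_nonneg ‖u - v‖])

theorem rayleighKernel_comm (b : ℝ) (u v : V) : rayleighKernel b u v = rayleighKernel b v u := by
  rw [rayleighKernel, norm_sub_rev, rayleighKernel]

theorem rayleighKernel_mul_rayleighKernel_same {a b s : ℝ} (hs : a + b = s) (u v : V) :
    rayleighKernel a u v * rayleighKernel b u v = rayleighKernel s u v := by
  simp only [rayleighKernel, ← exp_add, ← hs]
  ring_nf

theorem norm_rayleighKernel (b : ℝ) (u v : V) : ‖rayleighKernel b u v‖ = rayleighKernel b u v :=
  norm_of_nonneg (rayleighKernel_pos b u v).le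

variable [InnerProductSpace ℝ V]

-- `s = a + b` and `c = ab / (a + b)`, in division-free form so that instances close by `ring`.
theorem mul_norm_sub_sq_add_mul_norm_sub_sq_s15 {a b s c : ℝ} (hs : a + b = s) (hc : a * b = c * s)
    (hs0 : s ≠ 0) (u v w : V) :
    a * ‖u - w‖ ^ 2 + b * ‖w - v‖ ^ 2 =
      s * ‖w - s⁻¹ • (a • u + b • v)‖ ^ 2 + c * ‖u - v‖ ^ 2 := by
  have hcenter : w - s⁻¹ • (a • u + b • v) = s⁻¹ • (a • (w - u) + b • (w - v)) := by
    rw [smul_sub, smul_sub, sub_add_sub_comm, ← add_smul, hs, smul_sub, smul_smul,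
      inv_mul_cancel₀ hs0, one_smul]
  have hdiff : u - v = (w - v) - (w - u) := by abel
  rw [hcenter, hdiff, norm_sub_rev u w]
  generalize w - u = p, w - v = q
  rw [norm_smul, mul_pow, norm_add_sq_real, norm_sub_sq_real, norm_smul, norm_smul,
    real_inner_smul_left, real_inner_smul_right, real_inner_comm p q]
  simp only [Real.norm_eq_abs, mul_pow, sq_abs]
  field_simp
  linear_combination (‖q‖ ^ 2 - 2 * ⟪p, q⟫ + ‖p‖ ^ 2) * hc
    - (a * ‖p‖ ^ 2 + b * ‖q‖ ^ 2) * hs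

theorem rayleighKernel_mul_rayleighKernel {a b s c : ℝ} (hs : a + b = s) (hc : a * b = c * s)
    (hs0 : s ≠ 0) (u v w : V) :
    rayleighKernel a u w * rayleighKernel b w v =
      rayleighKernel c u v * rayleighKernel s w (s⁻¹ • (a • u + b • v)) := by
  simp only [rayleighKernel, ← exp_add]
  congr 1
  linear_combination -mul_norm_sub_sq_add_mul_norm_sub_sq_s15 hs hc hs0 u v w

variable [FiniteDimensional ℝ V] [MeasurableSpace V] [BorelSpace V]

theorem integral_rayleighKernel {b : ℝ} (hb : 0 < b) (c : V) :
    ∫ w, rayleighKernel b w c = (π / b) ^ (finrank ℝ V / 2 : ℝ) := by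
  simp only [rayleighKernel]
  rw [integral_sub_right_eq_self (fun w ↦ rexp (-b * ‖w‖ ^ 2)) c,
    GaussianFourier.integral_rexp_neg_mul_sq_norm hb]

theorem integrable_rayleighKernel {b : ℝ} (hb : 0 < b) (c : V) :
    Integrable fun w ↦ rayleighKernel b w c := by
  have h := (GaussianFourier.integrable_cexp_neg_mul_sq_norm_add
    (V := V) (b := (b : ℂ)) (by simpa using hb) 0 0).norm
  simpa [rayleighKernel, Complex.norm_exp, ← Complex.ofReal_pow] using h.comp_sub_right c

theorem integrable_rayleighKernel_left {b : ℝ} (hb : 0 < b) (c : V) :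
    Integrable fun w ↦ rayleighKernel b c w := by
  simpa only [rayleighKernel_comm b c] using integrable_rayleighKernel hb c

theorem integral_rayleighKernel_mul_rayleighKernel {a b s c : ℝ} (ha : 0 < a) (hb : 0 < b)
    (hs : a + b = s) (hc : a * b = c * s) (u v : V) :
    ∫ w, rayleighKernel a u w * rayleighKernel b w v =
      (π / s) ^ (finrank ℝ V / 2 : ℝ) * rayleighKernel c u v := by
  have hs0 : 0 < s := hs ▸ add_pos ha hb
  simp_rw [rayleighKernel_mul_rayleighKernel hs hc hs0.ne', integral_const_mul,
    integral_rayleighKernel hs0, mul_comm]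

end Kernel

section ThreeHop

variable {V : Type*} [NormedAddCommGroup V] [InnerProductSpace ℝ V] [FiniteDimensional ℝ V]
  [MeasurableSpace V] [BorelSpace V]

local notation "H" => rayleighKernel
local notation "r" => (finrank ℝ V / 2 : ℝ)

/-- The paper's `H⁽²⁾`. -/
noncomputable def twoHop (lam β : ℝ) (u v : V) : ℝ := lam * ∫ w, H β u w * H β w v

/-- The paper's `H⁽³⁾`. -/
noncomputable def threeHop (lam β : ℝ) (u v : V) : ℝ :=
  lam ^ 2 * ∫ w : V × V, H β u w.1 * H β w.1 w.2 * H β w.2 v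

variable (lam : ℝ) {β : ℝ} (hβ : 0 < β) (x y : V)
include hβ

theorem twoHop_eq (u v : V) : twoHop lam β u v = lam * (π / (2 * β)) ^ r * H (β / 2) u v := by
  rw [twoHop, integral_rayleighKernel_mul_rayleighKernel (s := 2 * β) (c := β / 2) hβ hβ (by ring)
    (by ring), mul_assoc]

theorem integral_rayleighKernel_mul_twoHop_sq :
    ∫ z, H β x z * twoHop lam β z y ^ 2 =
      lam ^ 2 * (π ^ 3 / (8 * β ^ 3)) ^ r * H (β / 2) x y := by
  have hsq : ∀ z, H β x z * twoHop lam β z y ^ 2 =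
      (lam * (π / (2 * β)) ^ r) ^ 2 * (H β x z * H β z y) := fun z ↦ by
    rw [twoHop_eq lam hβ, mul_pow, sq (H _ _ _),
      rayleighKernel_mul_rayleighKernel_same (add_halves β)]
    ring
  have hK : ((π / (2 * β)) ^ r) ^ 2 * (π / (2 * β)) ^ r = (π ^ 3 / (8 * β ^ 3)) ^ r := by
    rw [sq, ← mul_rpow (by positivity) (by positivity), ← mul_rpow (by positivity) (by positivity)]
    congr 1
    field_simp
    ring
  simp_rw [hsq, integral_const_mul, integral_rayleighKernel_mul_rayleighKernel (s := 2 * β)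
    (c := β / 2) hβ hβ (by ring) (by ring)]
  rw [← hK]
  ring

theorem integral_rayleighKernel_mul_twoHop_mul_twoHop_mul_rayleighKernel :
    ∫ z, H β x z * twoHop lam β x z * twoHop lam β z y * H β z y =
      lam ^ 2 * (π ^ 3 / (12 * β ^ 3)) ^ r * H (3 * β / 4) x y := by
  have hprod : ∀ z, H β x z * twoHop lam β x z * twoHop lam β z y * H β z y =
      (lam * (π / (2 * β)) ^ r) ^ 2 * (H (3 * β / 2) x z * H (3 * β / 2) z y) := fun z ↦ by
    have h32 : β + β / 2 = 3 * β / 2 := by ring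
    rw [twoHop_eq lam hβ, twoHop_eq lam hβ, ← rayleighKernel_mul_rayleighKernel_same h32,
      ← rayleighKernel_mul_rayleighKernel_same h32]
    ring
  have hK : ((π / (2 * β)) ^ r) ^ 2 * (π / (3 * β)) ^ r = (π ^ 3 / (12 * β ^ 3)) ^ r := by
    rw [sq, ← mul_rpow (by positivity) (by positivity), ← mul_rpow (by positivity) (by positivity)]
    congr 1
    field_simp
    ring
  simp_rw [hprod, integral_const_mul, integral_rayleighKernel_mul_rayleighKernel (a := 3 * β / 2)
    (b := 3 * β / 2) (s := 3 * β) (c := 3 * β / 4) (by positivity) (by positivity) (by ring)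
    (by ring)]
  rw [← hK]
  ring

theorem integrable_rayleighKernel_path (u v : V) :
    Integrable fun w : V × V ↦ H β u w.1 * H β w.1 w.2 * H β w.2 v := by
  refine ((integrable_rayleighKernel_left hβ u).mul_prod (integrable_rayleighKernel hβ v)).mono'
    (by unfold rayleighKernel; fun_prop) (ae_of_all _ fun w ↦ ?_)
  simp only [norm_mul, norm_rayleighKernel, mul_right_comm _ (H β w.1 w.2)]
  exact mul_le_of_le_one_right (mul_pos (rayleighKernel_pos ..) (rayleighKernel_pos ..)).le
    (rayleighKernel_le_one hβ.le ..)

theorem threeHop_eq (u v : V) :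
    threeHop lam β u v = lam ^ 2 * (π ^ 2 / (3 * β ^ 2)) ^ r * H (β / 3) u v := by
  have hK : (π / (2 * β)) ^ r * (π / (3 * β / 2)) ^ r = (π ^ 2 / (3 * β ^ 2)) ^ r := by
    rw [← mul_rpow (by positivity) (by positivity)]
    congr 1
    field_simp
  rw [threeHop, Measure.volume_eq_prod, integral_prod _ (integrable_rayleighKernel_path hβ u v)]
  simp_rw [mul_assoc (H β u _), integral_const_mul,
    integral_rayleighKernel_mul_rayleighKernel (s := 2 * β) (c := β / 2) hβ hβ (by ring) (by ring),
    mul_left_comm (H β u _), integral_const_mul,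
    integral_rayleighKernel_mul_rayleighKernel (a := β) (b := β / 2) (s := 3 * β / 2) (c := β / 3)
      hβ (by positivity) (by ring) (by ring), ← hK]
  ring

theorem integrable_rayleighKernel_diamond :
    Integrable fun z : V × V ↦ H β x z.1 * H β z.1 z.2 * H β z.2 y * H β x z.2 * H β z.1 y := by
  refine ((integrable_rayleighKernel_left hβ x).mul_prod
    (integrable_rayleighKernel_left hβ x)).mono' (by unfold rayleighKernel; fun_prop)
    (ae_of_all _ fun z ↦ ?_)
  simp only [norm_mul, norm_rayleighKernel]
  calc _ = H β x z.1 * H β x z.2 * (H β z.1 z.2 * H β z.2 y * H β z.1 y) := by ring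
    _ ≤ H β x z.1 * H β x z.2 := mul_le_of_le_one_right
        (mul_pos (rayleighKernel_pos ..) (rayleighKernel_pos ..)).le
        (mul_le_one₀ (mul_le_one₀ (rayleighKernel_le_one hβ.le ..) (rayleighKernel_pos ..).le
          (rayleighKernel_le_one hβ.le ..)) (rayleighKernel_pos ..).le
          (rayleighKernel_le_one hβ.le ..))

theorem integral_rayleighKernel_diamond :
    ∫ z : V × V, H β x z.1 * H β z.1 z.2 * H β z.2 y * H β x z.2 * H β z.1 y =
      (π ^ 2 / (8 * β ^ 2)) ^ r * H β x y := by
  set m : V := (2 * β)⁻¹ • (β • x + β • y)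
  have hmid : ∀ z, H β x z * H β z y = H (β / 2) x y * H (2 * β) z m := fun z ↦
    rayleighKernel_mul_rayleighKernel (by ring) (by ring) (by positivity) x y z
  have hinner : ∀ z₁, ∫ z₂, H β x z₁ * H β z₁ z₂ * H β z₂ y * H β x z₂ * H β z₁ y =
      H (β / 2) x y ^ 2 * (π / (3 * β)) ^ r * H (8 * β / 3) z₁ m := fun z₁ ↦ by
    have hsplit : ∀ z₂, H β x z₁ * H β z₁ z₂ * H β z₂ y * H β x z₂ * H β z₁ y =
        H β x z₁ * H β z₁ y * H (β / 2) x y * (H β z₁ z₂ * H (2 * β) z₂ m) := fun z₂ ↦ by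
      linear_combination H β x z₁ * H β z₁ y * H β z₁ z₂ * hmid z₂
    simp_rw [hsplit, integral_const_mul, integral_rayleighKernel_mul_rayleighKernel (a := β)
      (b := 2 * β) (s := 3 * β) (c := 2 * β / 3) hβ (by positivity) (by ring) (by ring), hmid,
      ← rayleighKernel_mul_rayleighKernel_same (a := 2 * β) (b := 2 * β / 3)
        (s := 8 * β / 3) (by ring)]
    ring
  have hK : (π / (3 * β)) ^ r * (π / (8 * β / 3)) ^ r = (π ^ 2 / (8 * β ^ 2)) ^ r := by
    rw [← mul_rpow (by positivity) (by positivity)]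
    congr 1
    field_simp
  rw [Measure.volume_eq_prod, integral_prod _ (integrable_rayleighKernel_diamond hβ x y)]
  simp_rw [hinner, integral_const_mul]
  rw [integral_rayleighKernel (by positivity), sq,
    rayleighKernel_mul_rayleighKernel_same (add_halves β), ← hK]
  ring

end ThreeHop

theorem variance_three_hop_count_general (d : ℕ) (β lam : ℝ) (hβ : 0 < β)
    (x y : EuclideanSpace ℝ (Fin d))
    (H2 H3 : EuclideanSpace ℝ (Fin d) → EuclideanSpace ℝ (Fin d) → ℝ)
    (hH2 : ∀ u v, H2 u v =
      lam * ∫ w : EuclideanSpace ℝ (Fin d),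
        Real.exp (-β * ‖u - w‖ ^ 2) * Real.exp (-β * ‖w - v‖ ^ 2))
    (hH3 : ∀ u v, H3 u v =
      lam ^ 2 * ∫ w : EuclideanSpace ℝ (Fin d) × EuclideanSpace ℝ (Fin d),
        Real.exp (-β * ‖u - w.1‖ ^ 2) * Real.exp (-β * ‖w.1 - w.2‖ ^ 2) *
          Real.exp (-β * ‖w.2 - v‖ ^ 2))
    (V : ℝ)
    (hV : V =
      2 * (lam * ∫ z : EuclideanSpace ℝ (Fin d),
          Real.exp (-β * ‖x - z‖ ^ 2) * (H2 z y) ^ 2) +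
        2 * (lam * ∫ z : EuclideanSpace ℝ (Fin d),
          Real.exp (-β * ‖x - z‖ ^ 2) * H2 x z * H2 z y * Real.exp (-β * ‖z - y‖ ^ 2)) +
        lam ^ 2 * (∫ z : EuclideanSpace ℝ (Fin d) × EuclideanSpace ℝ (Fin d),
          Real.exp (-β * ‖x - z.1‖ ^ 2) * Real.exp (-β * ‖z.1 - z.2‖ ^ 2) *
            Real.exp (-β * ‖z.2 - y‖ ^ 2) * Real.exp (-β * ‖x - z.2‖ ^ 2) *
            Real.exp (-β * ‖z.1 - y‖ ^ 2)) +
        H3 x y) :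
    V = 2 * lam ^ 3 * (Real.pi ^ 3 / (8 * β ^ 3)) ^ ((d : ℝ) / 2) *
          Real.exp (-β * ‖x - y‖ ^ 2 / 2) +
        lam ^ 2 * (Real.pi ^ 2 / (3 * β ^ 2)) ^ ((d : ℝ) / 2) *
          Real.exp (-β * ‖x - y‖ ^ 2 / 3) +
        2 * lam ^ 3 * (Real.pi ^ 3 / (12 * β ^ 3)) ^ ((d : ℝ) / 2) *
          Real.exp (-3 * β * ‖x - y‖ ^ 2 / 4) +
        lam ^ 2 * (Real.pi ^ 2 / (8 * β ^ 2)) ^ ((d : ℝ) / 2) *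
          Real.exp (-β * ‖x - y‖ ^ 2) := by
  have hH : ∀ p q : EuclideanSpace ℝ (Fin d), rexp (-β * ‖p - q‖ ^ 2) = rayleighKernel β p q :=
    fun _ _ ↦ rfl
  obtain rfl : H2 = twoHop lam β := funext₂ hH2
  obtain rfl : H3 = threeHop lam β := funext₂ hH3
  simp only [hH] at hV
  rw [hV, integral_rayleighKernel_mul_twoHop_sq lam hβ,
    integral_rayleighKernel_mul_twoHop_mul_twoHop_mul_rayleighKernel lam hβ,
    integral_rayleighKernel_diamond hβ, threeHop_eq lam hβ, finrank_euclideanSpace_fin]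
  simp only [rayleighKernel]
  ring_nf

/-- Corollary 5.3 of the paper: the variance of the `3`-hop count between `x` and `y`
in the Poisson random-connection model on `ℝ^d` with intensity `λ·dx` and Rayleigh
fading `H_β(u,v) = exp(-β‖u-v‖²)`, given its integral decomposition
(equation (4.3)), has the stated closed form. -/
theorem variance_three_hop_count (d : ℕ) (β lam : ℝ) (hβ : 0 < β) (hlam : 0 < lam)
    (x y : EuclideanSpace ℝ (Fin d))
    (H2 H3 : EuclideanSpace ℝ (Fin d) → EuclideanSpace ℝ (Fin d) → ℝ)
    (hH2 : ∀ u v, H2 u v =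
      lam * ∫ w : EuclideanSpace ℝ (Fin d),
        Real.exp (-β * ‖u - w‖ ^ 2) * Real.exp (-β * ‖w - v‖ ^ 2))
    (hH3 : ∀ u v, H3 u v =
      lam ^ 2 * ∫ w : EuclideanSpace ℝ (Fin d) × EuclideanSpace ℝ (Fin d),
        Real.exp (-β * ‖u - w.1‖ ^ 2) * Real.exp (-β * ‖w.1 - w.2‖ ^ 2) *
          Real.exp (-β * ‖w.2 - v‖ ^ 2))
    (V : ℝ)
    (hV : V =
      2 * (lam * ∫ z : EuclideanSpace ℝ (Fin d),
          Real.exp (-β * ‖x - z‖ ^ 2) * (H2 z y) ^ 2) +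
        2 * (lam * ∫ z : EuclideanSpace ℝ (Fin d),
          Real.exp (-β * ‖x - z‖ ^ 2) * H2 x z * H2 z y * Real.exp (-β * ‖z - y‖ ^ 2)) +
        lam ^ 2 * (∫ z : EuclideanSpace ℝ (Fin d) × EuclideanSpace ℝ (Fin d),
          Real.exp (-β * ‖x - z.1‖ ^ 2) * Real.exp (-β * ‖z.1 - z.2‖ ^ 2) *
            Real.exp (-β * ‖z.2 - y‖ ^ 2) * Real.exp (-β * ‖x - z.2‖ ^ 2) *
            Real.exp (-β * ‖z.1 - y‖ ^ 2)) +
        H3 x y) :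
    V = 2 * lam ^ 3 * (Real.pi ^ 3 / (8 * β ^ 3)) ^ ((d : ℝ) / 2) *
          Real.exp (-β * ‖x - y‖ ^ 2 / 2) +
        lam ^ 2 * (Real.pi ^ 2 / (3 * β ^ 2)) ^ ((d : ℝ) / 2) *
          Real.exp (-β * ‖x - y‖ ^ 2 / 3) +
        2 * lam ^ 3 * (Real.pi ^ 3 / (12 * β ^ 3)) ^ ((d : ℝ) / 2) *
          Real.exp (-3 * β * ‖x - y‖ ^ 2 / 4) +
        lam ^ 2 * (Real.pi ^ 2 / (8 * β ^ 2)) ^ ((d : ℝ) / 2) *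
          Real.exp (-β * ‖x - y‖ ^ 2) :=
  variance_three_hop_count_general d β lam hβ x y H2 H3 hH2 hH3 V hV
end
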